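/- Let (α_j), (β_j), (σ_j) satisfy α_j ≥ 0, 1 ≥ β_1 ≥ β_2 ≥ ⋯ > 0, 1 < σ_1 ≤ σ_2 ≤ ⋯, and suppose the ratios r_j := α_j/β_j satisfy 0 < r_1 ≤ r_2 ≤ ⋯ and B_* := liminf_{d→∞} (ln(α_d/β_d))/(ln d) > 0. Then for every τ with max{1/σ_1, 1/(1+B_*)} < τ < 1, one has sup_{d∈ℕ} ((Σ_{j=1}^d α_j)^τ + 2 Σ_{j=1}^d β_j^τ ζ(τσ_j))^{1/τ} / (Σ_{j=1}^d α_j + 2 Σ_{j=1}^d β_j ζ(σ_j)) < ∞. -/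

import Mathlib

open Filter Set

noncomputable def zetaR (s : ℝ) : ℝ := ∑' k : ℕ, 1 / ((k : ℝ) + 1) ^ s

noncomputable def Bstar (α β : ℕ → ℝ) : EReal :=
  Filter.atTop.liminf fun d : ℕ => ((Real.log (α d / β d) / Real.log d : ℝ) : EReal)

lemma aux_mono_of_step (f : ℕ → ℝ) (h : ∀ j : ℕ, 1 ≤ j → f j ≤ f (j + 1)) :
    ∀ j : ℕ, 1 ≤ j → f 1 ≤ f j := by
  intro j hj
  induction j with
  | zero => omega
  | succ n ih =>
    rcases Nat.eq_or_lt_of_le hj with h1 | h1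
    · rw [← h1]
    · exact le_trans (ih (by omega)) (h n (by omega))

lemma zeta_summable {s : ℝ} (hs : 1 < s) :
    Summable (fun k : ℕ => 1 / ((k : ℝ) + 1) ^ s) := by
  have h : Summable (fun n : ℕ => 1 / (n : ℝ) ^ s) :=
    Real.summable_one_div_nat_rpow.mpr hs
  have := (summable_nat_add_iff (f := fun n : ℕ => 1 / (n : ℝ) ^ s) 1).mpr h
  refine this.congr fun k => ?_
  push_cast
  ring_nf

lemma zetaR_nonneg {s : ℝ} : 0 ≤ zetaR s :=
  tsum_nonneg fun k => by positivity

lemma one_le_zetaR {s : ℝ} (hs : 1 < s) : 1 ≤ zetaR s := by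
  have h := Summable.le_tsum (zeta_summable hs) 0 fun j _ => by positivity
  rw [zetaR]
  simpa using h

lemma zetaR_anti {s t : ℝ} (hs : 1 < s) (hst : s ≤ t) : zetaR t ≤ zetaR s := by
  refine Summable.tsum_le_tsum (fun k => ?_) (zeta_summable (lt_of_lt_of_le hs hst)) (zeta_summable hs)
  have hk : (1 : ℝ) ≤ (k : ℝ) + 1 := by have := Nat.cast_nonneg (α := ℝ) k; linarith
  have h2 := Real.rpow_le_rpow_of_exponent_le hk hst
  have hp : (0:ℝ) < ((k : ℝ) + 1) ^ s := Real.rpow_pos_of_pos (by positivity) s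
  exact one_div_le_one_div_of_le hp h2

lemma key_pointwise {x s τ : ℝ} (hx : 0 ≤ x) (hs : 0 < s) (h0 : 0 < τ) (h1 : τ < 1) :
    x ^ τ ≤ s ^ (τ - 1) * x + s ^ τ := by
  rcases le_total x s with hxs | hxs
  · have : x ^ τ ≤ s ^ τ := Real.rpow_le_rpow hx hxs h0.le
    nlinarith [mul_nonneg (Real.rpow_nonneg hs.le (τ - 1)) hx]
  · have hxpos : 0 < x := hs.trans_le hxs
    have hxe : x ^ τ = x ^ (τ - 1) * x := by
      rw [← Real.rpow_add_one hxpos.ne' (τ - 1)]; ring_nf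
    have h2 : x ^ (τ - 1) ≤ s ^ (τ - 1) :=
      Real.rpow_le_rpow_of_nonpos hs hxs (by linarith)
    have := mul_le_mul_of_nonneg_right h2 hxpos.le
    rw [hxe]
    nlinarith [Real.rpow_nonneg hs.le τ]

set_option maxHeartbeats 2000000 in
/-- (Sufficiency part of the proof of Theorem 2.3.) Assume
`α_j ≥ 0`, `1 ≥ β_1 ≥ β_2 ≥ ⋯ > 0`, `1 < σ_1 ≤ σ_2 ≤ ⋯`, the ratios
`r_j = α_j/β_j` satisfy `0 < r_1 ≤ r_2 ≤ ⋯`, and `B_* > 0`. Then for every `τ`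
with `max{1/σ_1, 1/(1+B_*)} < τ < 1` (the condition `τ > 1/(1+B_*)` being
expressed as `1 < τ · (1 + B_*)` in the extended reals, so that it reads
`τ > 0` when `B_* = ∞`), one has
`sup_{d} ((∑_{j≤d} α_j)^τ + 2 ∑_{j≤d} β_j^τ ζ(τσ_j))^{1/τ} /
  (∑_{j≤d} α_j + 2 ∑_{j≤d} β_j ζ(σ_j)) < ∞`. -/
theorem korobov_sup_ratio_bounded (α β σ : ℕ → ℝ)
    (hα : ∀ j : ℕ, 1 ≤ j → 0 ≤ α j)
    (hβ1 : β 1 ≤ 1)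
    (hβpos : ∀ j : ℕ, 1 ≤ j → 0 < β j)
    (hβmono : ∀ j : ℕ, 1 ≤ j → β (j + 1) ≤ β j)
    (hσ1 : 1 < σ 1)
    (hσmono : ∀ j : ℕ, 1 ≤ j → σ j ≤ σ (j + 1))
    (hr1 : 0 < α 1 / β 1)
    (hrmono : ∀ j : ℕ, 1 ≤ j → α j / β j ≤ α (j + 1) / β (j + 1))
    (hB : 0 < Bstar α β) :
    ∀ τ : ℝ, 1 / σ 1 < τ → τ < 1 → (1 : EReal) < (τ : ℝ) * (1 + Bstar α β) →
      ∃ M : ℝ, ∀ d : ℕ, 1 ≤ d →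
        ((∑ j ∈ Finset.Icc 1 d, α j) ^ τ +
              2 * ∑ j ∈ Finset.Icc 1 d, β j ^ τ * zetaR (τ * σ j)) ^ (1 / τ) /
            (∑ j ∈ Finset.Icc 1 d, α j +
              2 * ∑ j ∈ Finset.Icc 1 d, β j * zetaR (σ j)) ≤ M := by
  intro τ hτσ hτ1 hτB
  have hσ1pos : (0:ℝ) < σ 1 := by linarith
  have hτpos : 0 < τ := lt_trans (by positivity) hτσ
  have hτσ1 : 1 < τ * σ 1 := by
    rw [div_lt_iff₀ hσ1pos] at hτσ; linarith
  -- choose B'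
  obtain ⟨B', hB'pos, hB'τ, hB'lt⟩ :
      ∃ B' : ℝ, 0 < B' ∧ 1 < τ * (1 + B') ∧ (B' : EReal) < Bstar α β := by
    rcases eq_top_or_lt_top (Bstar α β) with htop | htop
    · refine ⟨1 / τ, by positivity, ?_, ?_⟩
      · rw [mul_add, mul_one_div, div_self hτpos.ne']; linarith
      · rw [htop]; exact EReal.coe_lt_top _
    · have hbne : Bstar α β ≠ ⊥ := ne_bot_of_gt hB
      set b := (Bstar α β).toReal with hbdef
      have hco : Bstar α β = (b : EReal) := (EReal.coe_toReal htop.ne hbne).symm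
      rw [hco] at hτB
      have hco2 : (τ : EReal) * (1 + (b : EReal)) = (((τ * (1 + b)) : ℝ) : EReal) := by
        rw [← EReal.coe_one, ← EReal.coe_add, ← EReal.coe_mul]
      rw [hco2] at hτB
      have h1 : (1:ℝ) < τ * (1 + b) := by exact_mod_cast hτB
      have hb2 : (1 - τ) / τ < b := by
        rw [div_lt_iff₀ hτpos]; nlinarith
      refine ⟨((1 - τ) / τ + b) / 2, ?_, ?_, ?_⟩
      · have h0 : 0 < (1 - τ) / τ := div_pos (by linarith) hτpos
        linarith
      · have : (1 - τ) / τ < ((1 - τ) / τ + b) / 2 := by linarith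
        rw [div_lt_iff₀ hτpos] at this
        nlinarith
      · rw [hco, EReal.coe_lt_coe_iff]
        linarith
  -- eventual lower bound on the ratios
  have hev : ∀ᶠ d in atTop,
      (B' : EReal) < ((Real.log (α d / β d) / Real.log d : ℝ) : EReal) :=
    eventually_lt_of_lt_liminf hB'lt
  obtain ⟨N0, hN0⟩ := eventually_atTop.mp hev
  set N : ℕ := max (max N0 2) 1 with hNdef
  have hrj : ∀ j : ℕ, 1 ≤ j → 0 < α j / β j := fun j hj =>
    lt_of_lt_of_le hr1 (aux_mono_of_step (fun j => α j / β j) hrmono j hj)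
  have hσj : ∀ j : ℕ, 1 ≤ j → σ 1 ≤ σ j := aux_mono_of_step σ hσmono
  have hrd : ∀ d : ℕ, N ≤ d → (d:ℝ) ^ B' * β d ≤ α d := by
    intro d hd
    have h2 : 2 ≤ d := le_trans (le_trans (le_max_right N0 2) (le_max_left _ 1)) hd
    have hd1 : (1:ℝ) < (d:ℝ) := by exact_mod_cast h2.trans_lt' one_lt_two
    have hlog : 0 < Real.log d := Real.log_pos hd1
    have hlt := hN0 d (le_trans (le_trans (le_max_left N0 2) (le_max_left _ 1)) hd)
    rw [EReal.coe_lt_coe_iff] at hlt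
    have h3 : B' * Real.log d < Real.log (α d / β d) := (lt_div_iff₀ hlog).mp hlt
    have hrpos := hrj d (by omega)
    have h4 : (d:ℝ) ^ B' < α d / β d := by
      rw [Real.rpow_def_of_pos (by positivity : (0:ℝ) < (d:ℝ))]
      calc Real.exp (Real.log d * B') = Real.exp (B' * Real.log d) := by ring_nf
        _ < Real.exp (Real.log (α d / β d)) := Real.exp_lt_exp.mpr h3
        _ = α d / β d := Real.exp_log hrpos
    have hβd := hβpos d (by omega)
    rw [lt_div_iff₀ hβd] at h4
    exact h4.le
  -- uniform constant c
  set c : ℝ := min 1 (2 / (N:ℝ) ^ B') with hcdef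
  have hNpos : (0:ℝ) < (N:ℝ) := by
    have : 1 ≤ N := le_max_right _ 1
    exact_mod_cast this.trans_lt' zero_lt_one
  have hNB : (0:ℝ) < (N:ℝ) ^ B' := Real.rpow_pos_of_pos hNpos B'
  have hc : 0 < c := lt_min one_pos (by positivity)
  have hc1 : c ≤ 1 := min_le_left _ _
  have hkey : ∀ j : ℕ, 1 ≤ j → c * ((j:ℝ) ^ B' * β j) ≤ α j + 2 * β j := by
    intro j hj
    have hβj := hβpos j hj
    have hjB : (0:ℝ) < (j:ℝ) ^ B' := Real.rpow_pos_of_pos (by exact_mod_cast hj) B'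
    rcases le_or_gt N j with hNj | hNj
    · have h1 := hrd j hNj
      have h2 : c * ((j:ℝ) ^ B' * β j) ≤ (j:ℝ) ^ B' * β j :=
        mul_le_of_le_one_left (mul_pos hjB hβj).le hc1
      linarith
    · have hjN : (j:ℝ) ^ B' ≤ (N:ℝ) ^ B' :=
        Real.rpow_le_rpow (by positivity) (by exact_mod_cast hNj.le) hB'pos.le
      have hc2 : c ≤ 2 / (N:ℝ) ^ B' := min_le_right _ _
      have h3 : c * (j:ℝ) ^ B' ≤ 2 := by
        calc c * (j:ℝ) ^ B' ≤ (2 / (N:ℝ) ^ B') * (N:ℝ) ^ B' := by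
              apply mul_le_mul hc2 hjN hjB.le (by positivity)
          _ = 2 := by field_simp
      have hαj := hα j hj
      have h4 := mul_le_mul_of_nonneg_right h3 hβj.le
      have h5 : c * ((j:ℝ) ^ B' * β j) = c * (j:ℝ) ^ B' * β j := by ring
      linarith only [hαj, h4, h5, hβj]
  -- constants K, Z
  set p : ℝ := B' * τ / (1 - τ) with hpdef
  have hτ1' : (0:ℝ) < 1 - τ := by linarith
  have hp1 : 1 < p := by
    rw [hpdef, lt_div_iff₀ hτ1']; nlinarith
  have hKsum : Summable (fun j : ℕ => (j:ℝ) ^ (-p)) :=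
    Real.summable_nat_rpow.mpr (by linarith)
  set K : ℝ := ∑' j : ℕ, (j:ℝ) ^ (-p) with hKdef
  have hK1 : 1 ≤ K := by
    have h := Summable.le_tsum hKsum 1 fun j _ => Real.rpow_nonneg (Nat.cast_nonneg j) _
    simpa using h
  have hKpos : 0 < K := lt_of_lt_of_le one_pos hK1
  set Z : ℝ := zetaR (τ * σ 1) with hZdef
  have hZ1 : 1 ≤ Z := one_le_zetaR hτσ1
  have hZpos : 0 < Z := lt_of_lt_of_le one_pos hZ1
  set C1 : ℝ := 4 * Z * K ^ (1 - τ) with hC1def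
  have hC1pos : 0 < C1 := by positivity
  have hcτ : (0:ℝ) < c ^ τ := Real.rpow_pos_of_pos hc τ
  refine ⟨(1 + C1 / c ^ τ) ^ (1 / τ), ?_⟩
  intro d hd
  set A : ℝ := ∑ j ∈ Finset.Icc 1 d, α j with hAdef
  set S1 : ℝ := ∑ j ∈ Finset.Icc 1 d, β j * zetaR (σ j) with hS1def
  set Sτ : ℝ := ∑ j ∈ Finset.Icc 1 d, β j ^ τ * zetaR (τ * σ j) with hSτdef
  set T : ℝ := ∑ j ∈ Finset.Icc 1 d, (j:ℝ) ^ B' * β j with hTdef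
  have hmem : ∀ j ∈ Finset.Icc 1 d, 1 ≤ j := fun j hj => (Finset.mem_Icc.mp hj).1
  have hA0 : 0 ≤ A := Finset.sum_nonneg fun j hj => hα j (hmem j hj)
  have hne : (Finset.Icc 1 d).Nonempty := ⟨1, Finset.mem_Icc.mpr ⟨le_refl 1, hd⟩⟩
  have hTpos : 0 < T := Finset.sum_pos (fun j hj => by
    have h1 := hmem j hj
    have := hβpos j h1
    have : (0:ℝ) < (j:ℝ) ^ B' := Real.rpow_pos_of_pos (by exact_mod_cast h1) B'
    positivity) hne
  have hS1β : ∑ j ∈ Finset.Icc 1 d, β j ≤ S1 := by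
    apply Finset.sum_le_sum
    intro j hj
    have h1 := hmem j hj
    have hζ : 1 ≤ zetaR (σ j) := one_le_zetaR (lt_of_lt_of_le hσ1 (hσj j h1))
    exact le_mul_of_one_le_right (hβpos j h1).le hζ
  have hS1nn : 0 ≤ S1 := Finset.sum_nonneg fun j hj =>
    mul_nonneg (hβpos j (hmem j hj)).le zetaR_nonneg
  set D : ℝ := A + 2 * S1 with hDdef
  have hβ1pos := hβpos 1 le_rfl
  have hβ1S : β 1 ≤ ∑ j ∈ Finset.Icc 1 d, β j := by
    apply Finset.single_le_sum (f := fun j => β j)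
      (fun j hj => (hβpos j (hmem j hj)).le) (Finset.mem_Icc.mpr ⟨le_refl 1, hd⟩)
  have hDpos : 0 < D := by
    have hS1b : 0 < S1 := lt_of_lt_of_le hβ1pos (le_trans hβ1S hS1β)
    rw [hDdef]
    linarith only [hA0, hS1b]
  have hcTD : c * T ≤ D := by
    have h1 : c * T ≤ ∑ j ∈ Finset.Icc 1 d, (α j + 2 * β j) := by
      rw [Finset.mul_sum]
      exact Finset.sum_le_sum fun j hj => hkey j (hmem j hj)
    rw [Finset.sum_add_distrib, ← Finset.mul_sum] at h1
    rw [hDdef]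
    linarith only [h1, hS1β]
  -- the Hölder-type bound on ∑ β^τ
  set lam : ℝ := T / K with hlamdef
  have hlampos : 0 < lam := div_pos hTpos hKpos
  have hq : -(B' / (1 - τ)) * (τ - 1) = B' := by field_simp; ring
  have hq2 : -(B' / (1 - τ)) * τ = -p := by rw [hpdef]; field_simp
  have hβτ : ∑ j ∈ Finset.Icc 1 d, β j ^ τ ≤ lam ^ (τ - 1) * T + lam ^ τ * K := by
    have hstep : ∀ j ∈ Finset.Icc 1 d,
        β j ^ τ ≤ lam ^ (τ - 1) * ((j:ℝ) ^ B' * β j) + lam ^ τ * (j:ℝ) ^ (-p) := by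
      intro j hj
      have h1 := hmem j hj
      have hjpos : (0:ℝ) < (j:ℝ) := by exact_mod_cast h1
      set s : ℝ := lam * (j:ℝ) ^ (-(B' / (1 - τ))) with hsdef
      have hspos : 0 < s := mul_pos hlampos (Real.rpow_pos_of_pos hjpos _)
      have hkp := key_pointwise (hβpos j h1).le hspos hτpos hτ1
      have e1 : s ^ (τ - 1) = lam ^ (τ - 1) * (j:ℝ) ^ B' := by
        rw [hsdef, Real.mul_rpow hlampos.le (Real.rpow_nonneg hjpos.le _),
          ← Real.rpow_mul hjpos.le, hq]
      have e2 : s ^ τ = lam ^ τ * (j:ℝ) ^ (-p) := by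
        rw [hsdef, Real.mul_rpow hlampos.le (Real.rpow_nonneg hjpos.le _),
          ← Real.rpow_mul hjpos.le, hq2]
      calc β j ^ τ ≤ s ^ (τ - 1) * β j + s ^ τ := hkp
        _ = lam ^ (τ - 1) * ((j:ℝ) ^ B' * β j) + lam ^ τ * (j:ℝ) ^ (-p) := by
            rw [e1, e2]; ring
    calc ∑ j ∈ Finset.Icc 1 d, β j ^ τ
        ≤ ∑ j ∈ Finset.Icc 1 d,
            (lam ^ (τ - 1) * ((j:ℝ) ^ B' * β j) + lam ^ τ * (j:ℝ) ^ (-p)) :=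
          Finset.sum_le_sum hstep
      _ = lam ^ (τ - 1) * T + lam ^ τ * ∑ j ∈ Finset.Icc 1 d, (j:ℝ) ^ (-p) := by
          rw [Finset.sum_add_distrib, ← Finset.mul_sum, ← Finset.mul_sum]
      _ ≤ lam ^ (τ - 1) * T + lam ^ τ * K := by
          have hsub : ∑ j ∈ Finset.Icc 1 d, (j:ℝ) ^ (-p) ≤ K :=
            Summable.sum_le_tsum (Finset.Icc 1 d)
              (fun j _ => Real.rpow_nonneg (Nat.cast_nonneg j) _) hKsum
          have := mul_le_mul_of_nonneg_left hsub (Real.rpow_nonneg hlampos.le τ)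
          linarith only [this]
  have hTne : T ≠ 0 := hTpos.ne'
  have hKne : K ≠ 0 := hKpos.ne'
  have hKτne : K ^ τ ≠ 0 := (Real.rpow_pos_of_pos hKpos τ).ne'
  have l1 : lam ^ (τ - 1) * T = T ^ τ * K ^ (1 - τ) := by
    rw [hlamdef, Real.div_rpow hTpos.le hKpos.le]
    simp only [Real.rpow_sub hTpos, Real.rpow_sub hKpos, Real.rpow_one]
    field_simp
  have l2 : lam ^ τ * K = T ^ τ * K ^ (1 - τ) := by
    rw [hlamdef, Real.div_rpow hTpos.le hKpos.le]
    simp only [Real.rpow_sub hKpos, Real.rpow_one]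
    field_simp
  have hβτ2 : ∑ j ∈ Finset.Icc 1 d, β j ^ τ ≤ 2 * (T ^ τ * K ^ (1 - τ)) := by
    rw [l1, l2] at hβτ; linarith only [hβτ]
  -- bound Sτ
  have hSτZ : Sτ ≤ Z * ∑ j ∈ Finset.Icc 1 d, β j ^ τ := by
    rw [hSτdef, Finset.mul_sum]
    apply Finset.sum_le_sum
    intro j hj
    have h1 := hmem j hj
    have hζ : zetaR (τ * σ j) ≤ Z :=
      zetaR_anti hτσ1 (mul_le_mul_of_nonneg_left (hσj j h1) hτpos.le)
    have hβτnn : 0 ≤ β j ^ τ := Real.rpow_nonneg (hβpos j h1).le τ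
    calc β j ^ τ * zetaR (τ * σ j) ≤ β j ^ τ * Z := by
          exact mul_le_mul_of_nonneg_left hζ hβτnn
      _ = Z * β j ^ τ := mul_comm _ _
  have hSτnn : 0 ≤ Sτ := Finset.sum_nonneg fun j hj =>
    mul_nonneg (Real.rpow_nonneg (hβpos j (hmem j hj)).le τ) zetaR_nonneg
  -- assemble
  have hAD : A ≤ D := by rw [hDdef]; linarith only [hS1nn]
  have hAτ : A ^ τ ≤ D ^ τ := Real.rpow_le_rpow hA0 hAD hτpos.le
  have hTD : T ≤ D / c := (le_div_iff₀ hc).mpr (by rw [mul_comm]; exact hcTD)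
  have hTτ : T ^ τ ≤ D ^ τ / c ^ τ := by
    have := Real.rpow_le_rpow hTpos.le hTD hτpos.le
    rwa [Real.div_rpow hDpos.le hc.le] at this
  have hTτnn : 0 ≤ T ^ τ := Real.rpow_nonneg hTpos.le τ
  have hKτ' : 0 < K ^ (1 - τ) := Real.rpow_pos_of_pos hKpos _
  have hNb : A ^ τ + 2 * Sτ ≤ (1 + C1 / c ^ τ) * D ^ τ := by
    have h7 : Sτ ≤ Z * (2 * (T ^ τ * K ^ (1 - τ))) :=
      le_trans hSτZ (mul_le_mul_of_nonneg_left hβτ2 hZpos.le)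
    have h8 : 2 * Sτ ≤ C1 * T ^ τ := by rw [hC1def]; linarith only [h7]
    have h9 : C1 * T ^ τ ≤ C1 * (D ^ τ / c ^ τ) :=
      mul_le_mul_of_nonneg_left hTτ hC1pos.le
    have h10 : C1 * (D ^ τ / c ^ τ) = C1 / c ^ τ * D ^ τ := by ring
    linarith only [hAτ, h8, h9, h10]
  have hNb0 : 0 ≤ A ^ τ + 2 * Sτ := by
    have h11 := Real.rpow_nonneg hA0 τ
    linarith only [h11, hSτnn]
  have hMpos : (0:ℝ) < 1 + C1 / c ^ τ := by positivity
  have h5 : (A ^ τ + 2 * Sτ) ^ (1 / τ) ≤ ((1 + C1 / c ^ τ) * D ^ τ) ^ (1 / τ) :=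
    Real.rpow_le_rpow hNb0 hNb (by positivity)
  have h6 : ((1 + C1 / c ^ τ) * D ^ τ) ^ (1 / τ)
      = (1 + C1 / c ^ τ) ^ (1 / τ) * D := by
    rw [Real.mul_rpow hMpos.le (Real.rpow_nonneg hDpos.le τ),
      ← Real.rpow_mul hDpos.le, mul_one_div_cancel hτpos.ne', Real.rpow_one]
  rw [div_le_iff₀ hDpos]
  calc (A ^ τ + 2 * Sτ) ^ (1 / τ) ≤ ((1 + C1 / c ^ τ) * D ^ τ) ^ (1 / τ) := h5
    _ = (1 + C1 / c ^ τ) ^ (1 / τ) * D := h6
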